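/- arXiv:1709.05266 — 6 statements merged into one kernel-verified Lean document; each statement's English description precedes it below -/
import Mathlib

section
/- For the Hamming ball volume V(n,r) = ∑_{k ≤ nr} C(n,k) with 0 < r < 1/2, one has V(n,r) ≤ 2^{H(r)·n}, where H is the binary entropy function. -/
open Finset

/-- The binary entropy function (base-2 logarithms). -/
noncomputable def binH (p : ℝ) : ℝ := -(p * Real.logb 2 p + (1 - p) * Real.logb 2 (1 - p))

/-- Volume of the Hamming ball of normalized radius `r` in `{0,1}ⁿ`. -/
noncomputable def V (n : ℕ) (r : ℝ) : ℕ :=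
  ∑ k ∈ (Finset.range (n + 1)).filter (fun k : ℕ => (k : ℝ) ≤ (n : ℝ) * r), n.choose k

theorem stmt3 (n : ℕ) (r : ℝ) (hr0 : 0 < r) (hr1 : r < 1/2) :
    (V n r : ℝ) ≤ 2 ^ (binH r * n) := by
  have hq0 : (0:ℝ) < 1 - r := by linarith
  have hrq : r ≤ 1 - r := by linarith
  set q : ℝ := 1 - r with hq
  -- 2 ^ (-(binH r * n)) = r ^ (n*r) * q ^ (n - n*r)
  have hkey : (2:ℝ) ^ (-(binH r * (n:ℝ))) = r ^ ((n:ℝ)*r) * q ^ ((n:ℝ) - (n:ℝ)*r) := by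
    have h1 : -(binH r * (n:ℝ)) =
        Real.logb 2 r * ((n:ℝ)*r) + Real.logb 2 q * ((n:ℝ) - (n:ℝ)*r) := by
      simp only [binH, hq]; ring
    rw [h1, Real.rpow_add (by norm_num),
        Real.rpow_mul (by norm_num : (0:ℝ) ≤ 2) (Real.logb 2 r) ((n:ℝ)*r),
        Real.rpow_mul (by norm_num : (0:ℝ) ≤ 2) (Real.logb 2 q) ((n:ℝ) - (n:ℝ)*r),
        Real.rpow_logb (by norm_num) (by norm_num) hr0,
        Real.rpow_logb (by norm_num) (by norm_num) hq0]
  -- monotonicity in exponent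
  have hterm : ∀ k ∈ (Finset.range (n + 1)).filter (fun k : ℕ => (k : ℝ) ≤ (n : ℝ) * r),
      r ^ ((n:ℝ)*r) * q ^ ((n:ℝ) - (n:ℝ)*r) ≤ r ^ k * q ^ (n - k) := by
    intro k hk
    simp only [mem_filter, mem_range] at hk
    obtain ⟨hkn, hkr⟩ := hk
    have hkn' : k ≤ n := Nat.lt_succ_iff.mp hkn
    have hid : ∀ a : ℝ, r ^ a * q ^ ((n:ℝ) - a) = q ^ (n:ℝ) * (r / q) ^ a := by
      intro a
      rw [Real.div_rpow hr0.le hq0.le, Real.rpow_sub hq0]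
      field_simp
    have hcast : (r:ℝ) ^ k * q ^ (n - k) = r ^ ((k:ℕ):ℝ) * q ^ ((n:ℝ) - (k:ℕ)) := by
      rw [Real.rpow_natCast]
      congr 1
      rw [show (n:ℝ) - (k:ℕ) = ((n - k : ℕ) : ℝ) by
            rw [Nat.cast_sub hkn'],
          Real.rpow_natCast]
    rw [hcast, hid ((n:ℝ)*r), hid ((k:ℕ):ℝ)]
    have hmono : (r / q) ^ ((n:ℝ)*r) ≤ (r / q) ^ ((k:ℕ):ℝ) :=
      Real.rpow_le_rpow_of_exponent_ge (by positivity)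
        ((div_le_one hq0).mpr hrq) hkr
    have := mul_le_mul_of_nonneg_left hmono (le_of_lt (Real.rpow_pos_of_pos hq0 (n:ℝ)))
    linarith
  -- main inequality: V * 2^(-nH) ≤ 1
  have hmain : (V n r : ℝ) * (2:ℝ) ^ (-(binH r * (n:ℝ))) ≤ 1 := by
    rw [hkey]
    have hV : (V n r : ℝ) = ∑ k ∈ (Finset.range (n + 1)).filter
        (fun k : ℕ => (k : ℝ) ≤ (n : ℝ) * r), (n.choose k : ℝ) := by
      simp [V]
    rw [hV, Finset.sum_mul]
    calc (∑ k ∈ (Finset.range (n + 1)).filter (fun k : ℕ => (k : ℝ) ≤ (n : ℝ) * r),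
            (n.choose k : ℝ) * (r ^ ((n:ℝ)*r) * q ^ ((n:ℝ) - (n:ℝ)*r)))
        ≤ ∑ k ∈ (Finset.range (n + 1)).filter (fun k : ℕ => (k : ℝ) ≤ (n : ℝ) * r),
            (n.choose k : ℝ) * (r ^ k * q ^ (n - k)) := by
          apply Finset.sum_le_sum
          intro k hk
          exact mul_le_mul_of_nonneg_left (hterm k hk) (by positivity)
      _ ≤ ∑ k ∈ Finset.range (n + 1), (n.choose k : ℝ) * (r ^ k * q ^ (n - k)) := by
          apply Finset.sum_le_sum_of_subset_of_nonneg (Finset.filter_subset _ _)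
          intro k _ _
          positivity
      _ = (r + q) ^ n := by
          rw [add_pow]
          apply Finset.sum_congr rfl
          intro k _
          ring
      _ = 1 := by rw [hq]; norm_num
  -- conclude
  have hpos : (0:ℝ) < (2:ℝ) ^ (binH r * (n:ℝ)) := Real.rpow_pos_of_pos (by norm_num) _
  rw [Real.rpow_neg (by norm_num)] at hmain
  calc (V n r : ℝ) = (V n r : ℝ) * (((2:ℝ) ^ (binH r * (n:ℝ)))⁻¹ * (2:ℝ) ^ (binH r * (n:ℝ))) := by
        rw [inv_mul_cancel₀ hpos.ne', mul_one]
    _ = ((V n r : ℝ) * ((2:ℝ) ^ (binH r * (n:ℝ)))⁻¹) * (2:ℝ) ^ (binH r * (n:ℝ)) := by ring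
    _ ≤ 1 * (2:ℝ) ^ (binH r * (n:ℝ)) := by
        exact mul_le_mul_of_nonneg_right hmain hpos.le
    _ = 2 ^ (binH r * (n:ℝ)) := one_mul _
end

section
/- Let g = H⁻¹ : [0,1] → [0,1/2] be the inverse of the binary entropy function. For any a ∈ (0,1], the function p(x) = g(a·x + 1 − a) − g(x) is concave on [0,1]. -/
open Real Set

lemma StrictMonoOn.continuousOn_of_ordConnected_image {α β : Type*} [LinearOrder α]
    [TopologicalSpace α] [OrderTopology α] [LinearOrder β] [TopologicalSpace β] [OrderTopology β]
    {f : α → β} {s : Set α} [OrdConnected s] (hf : StrictMonoOn f s) (hs : OrdConnected (f '' s)) :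
    ContinuousOn f s := by
  rw [continuousOn_iff_continuous_domRestrict]
  exact continuous_subtype_val.comp (hf.orderIso f s).continuous

lemma antitoneOn_of_hasDerivAt_nonpos {D : Set ℝ} (hD : Convex ℝ D) {f f' : ℝ → ℝ}
    (hf : ∀ x ∈ D, HasDerivAt f (f' x) x) (hf' : ∀ x ∈ interior D, f' x ≤ 0) :
    AntitoneOn f D :=
  antitoneOn_of_hasDerivWithinAt_nonpos hD (fun x hx => (hf x hx).continuousAt.continuousWithinAt)
    (fun x hx => (hf x (interior_subset hx)).hasDerivWithinAt) hf'

noncomputable def entropySlope (t : ℝ) : ℝ := log (1 - t) - log t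

noncomputable def entropyDeficit (t : ℝ) : ℝ := log 2 - binEntropy t

section EntropyFunctions

variable {t : ℝ}

lemma entropySlope_pos (h0 : 0 < t) (h1 : t < 1 / 2) : 0 < entropySlope t :=
  sub_pos.2 (log_lt_log h0 (by linarith))

lemma entropyDeficit_nonneg (t : ℝ) : 0 ≤ entropyDeficit t :=
  sub_nonneg.2 binEntropy_le_log_two

lemma entropyDeficit_le_log_two (h0 : 0 ≤ t) (h1 : t ≤ 1) : entropyDeficit t ≤ log 2 :=
  sub_le_self _ (binEntropy_nonneg h0 h1)

lemma entropySlope_half : entropySlope (1 / 2) = 0 := by norm_num [entropySlope]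

lemma entropyDeficit_half : entropyDeficit (1 / 2) = 0 := by
  rw [entropyDeficit, one_div, binEntropy_two_inv, sub_self]

lemma hasDerivAt_entropySlope (h0 : t ≠ 0) (h1 : t ≠ 1) :
    HasDerivAt entropySlope (-1 / (t * (1 - t))) t := by
  have h1' : 1 - t ≠ 0 := sub_ne_zero.2 h1.symm
  refine ((((hasDerivAt_id' t).const_sub 1).log h1').sub ((hasDerivAt_id' t).log h0)).congr_deriv ?_
  field_simp
  ring

lemma hasDerivAt_entropyDeficit (h0 : t ≠ 0) (h1 : t ≠ 1) :
    HasDerivAt entropyDeficit (-entropySlope t) t :=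
  (hasDerivAt_binEntropy h0 h1).const_sub (log 2)

end EntropyFunctions

noncomputable def deficitRatio (t : ℝ) : ℝ :=
  entropyDeficit t ^ 2 / (t * (1 - t) * entropySlope t ^ 3)

noncomputable def deficitRatioFactor (t : ℝ) : ℝ :=
  2 * t * (1 - t) * entropySlope t ^ 2 + (1 - 2 * t) * entropySlope t * entropyDeficit t
    - 3 * entropyDeficit t

noncomputable def deficitRatioFactorSlope (t : ℝ) : ℝ :=
  2 * t * (1 - t) * entropySlope t * (1 + 2 * entropyDeficit t) + 2 * (1 - 2 * t) * entropyDeficit t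
    - 2 * t * (1 - t) * (1 - 2 * t) * entropySlope t ^ 2

section DeficitRatio

variable {t : ℝ}

lemma hasDerivAt_deficitRatioFactorSlope (h0 : 0 < t) (h1 : t < 1) :
    HasDerivAt deficitRatioFactorSlope (-2 * (((1 - 2 * t) * entropySlope t - 1 - entropyDeficit t) ^ 2
      + entropyDeficit t * (2 - entropyDeficit t))) t := by
  have hL := hasDerivAt_entropySlope h0.ne' h1.ne
  have hK := hasDerivAt_entropyDeficit h0.ne' h1.ne
  have hid := hasDerivAt_id' t
  refine ((((((hid.const_mul 2).mul (hid.const_sub 1)).mul hL).mul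
    ((hK.const_mul 2).const_add 1)).add (((hid.const_mul 2).const_sub 1).const_mul 2 |>.mul hK)).sub
    ((((hid.const_mul 2).mul (hid.const_sub 1)).mul ((hid.const_mul 2).const_sub 1)).mul
      (hL.pow 2))).congr_deriv ?_
  have : 1 - t ≠ 0 := by linarith
  simp only [Pi.mul_apply, Pi.pow_apply]
  field_simp
  ring

lemma deficitRatioFactorSlope_half : deficitRatioFactorSlope (1 / 2) = 0 := by
  rw [deficitRatioFactorSlope, entropySlope_half, entropyDeficit_half]
  ring

lemma deficitRatioFactorSlope_nonneg (h0 : 0 < t) (h1 : t ≤ 1 / 2) :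
    0 ≤ deficitRatioFactorSlope t := by
  have hanti : AntitoneOn deficitRatioFactorSlope (Ioc 0 (1 / 2)) := by
    refine antitoneOn_of_hasDerivAt_nonpos (convex_Ioc _ _)
      (fun x hx => hasDerivAt_deficitRatioFactorSlope hx.1 (by linarith [hx.2])) ?_
    rw [interior_Ioc]
    intro x hx
    have := entropyDeficit_nonneg x
    have := entropyDeficit_le_log_two hx.1.le (by linarith [hx.2])
    have := log_two_lt_d9
    nlinarith [sq_nonneg ((1 - 2 * x) * entropySlope x - 1 - entropyDeficit x)]
  simpa only [deficitRatioFactorSlope_half] using hanti ⟨h0, h1⟩ ⟨by norm_num, le_rfl⟩ h1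

lemma hasDerivAt_deficitRatioFactor (h0 : 0 < t) (h1 : t < 1) :
    HasDerivAt deficitRatioFactor (-deficitRatioFactorSlope t / (2 * t * (1 - t))) t := by
  have hL := hasDerivAt_entropySlope h0.ne' h1.ne
  have hK := hasDerivAt_entropyDeficit h0.ne' h1.ne
  have hid := hasDerivAt_id' t
  refine (((((hid.const_mul 2).mul (hid.const_sub 1)).mul (hL.pow 2)).add
    ((((hid.const_mul 2).const_sub 1).mul hL).mul hK)).sub (hK.const_mul 3)).congr_deriv ?_
  have : 1 - t ≠ 0 := by linarith
  rw [deficitRatioFactorSlope]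
  simp only [Pi.mul_apply, Pi.pow_apply]
  field_simp
  ring

lemma deficitRatioFactor_half : deficitRatioFactor (1 / 2) = 0 := by
  rw [deficitRatioFactor, entropySlope_half, entropyDeficit_half]
  ring

lemma deficitRatioFactor_nonneg (h0 : 0 < t) (h1 : t ≤ 1 / 2) : 0 ≤ deficitRatioFactor t := by
  have hanti : AntitoneOn deficitRatioFactor (Ioc 0 (1 / 2)) := by
    refine antitoneOn_of_hasDerivAt_nonpos (convex_Ioc _ _)
      (fun x hx => hasDerivAt_deficitRatioFactor hx.1 (by linarith [hx.2])) ?_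
    rw [interior_Ioc]
    intro x hx
    have := deficitRatioFactorSlope_nonneg hx.1 hx.2.le
    have : 0 < 2 * x * (1 - x) := by nlinarith [hx.1, hx.2]
    exact div_nonpos_of_nonpos_of_nonneg (by linarith) this.le
  simpa only [deficitRatioFactor_half] using hanti ⟨h0, h1⟩ ⟨by norm_num, le_rfl⟩ h1

lemma hasDerivAt_deficitRatio (h0 : 0 < t) (h1 : t < 1 / 2) :
    HasDerivAt deficitRatio (-entropyDeficit t * entropySlope t ^ 2 * deficitRatioFactor t
      / (t * (1 - t) * entropySlope t ^ 3) ^ 2) t := by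
  have hL := hasDerivAt_entropySlope h0.ne' (by linarith)
  have hK := hasDerivAt_entropyDeficit h0.ne' (by linarith)
  have hid := hasDerivAt_id' t
  have hW : t * (1 - t) * entropySlope t ^ 3 ≠ 0 := by
    have := entropySlope_pos h0 h1
    have : 0 < 1 - t := by linarith
    positivity
  refine ((hK.pow 2).div ((hid.mul (hid.const_sub 1)).mul (hL.pow 3)) hW).congr_deriv ?_
  have : 1 - t ≠ 0 := by linarith
  have : entropySlope t ≠ 0 := (entropySlope_pos h0 h1).ne'
  rw [deficitRatioFactor]
  simp only [Pi.mul_apply, Pi.pow_apply]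
  field_simp
  ring

lemma deficitRatio_antitoneOn : AntitoneOn deficitRatio (Ioo 0 (1 / 2)) := by
  refine antitoneOn_of_hasDerivAt_nonpos (convex_Ioo _ _)
    (fun x hx => hasDerivAt_deficitRatio hx.1 hx.2) ?_
  rw [interior_Ioo]
  intro x hx
  have := mul_nonneg (mul_nonneg (entropyDeficit_nonneg x) (sq_nonneg (entropySlope x)))
    (deficitRatioFactor_nonneg hx.1 hx.2.le)
  exact div_nonpos_of_nonpos_of_nonneg (by linarith) (sq_nonneg _)

end DeficitRatio

lemma mul_add_one_sub_mem_Ioo {a x : ℝ} (ha : a ∈ Ioc (0 : ℝ) 1) (hx : x ∈ Ioo (0 : ℝ) 1) :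
    a * x + 1 - a ∈ Ioo (0 : ℝ) 1 :=
  ⟨by nlinarith [ha.2, mul_pos ha.1 hx.1], by nlinarith [mul_pos ha.1 (sub_pos.2 hx.2)]⟩

lemma concaveOn_comp_affine_sub {f f' f'' : ℝ → ℝ} {a : ℝ} (ha : a ∈ Ioc (0 : ℝ) 1)
    (hf : ContinuousOn f (Icc 0 1)) (hf' : ∀ x ∈ Ioo (0 : ℝ) 1, HasDerivAt f (f' x) x)
    (hf'' : ∀ x ∈ Ioo (0 : ℝ) 1, HasDerivAt f' (f'' x) x)
    (hle : ∀ x ∈ Ioo (0 : ℝ) 1, a ^ 2 * f'' (a * x + 1 - a) ≤ f'' x) :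
    ConcaveOn ℝ (Icc 0 1) (fun x => f (a * x + 1 - a) - f x) := by
  have hmaps : MapsTo (fun x => a * x + 1 - a) (Icc 0 1) (Icc 0 1) := fun x hx =>
    ⟨by nlinarith [ha.2, mul_nonneg ha.1.le hx.1], by nlinarith [mul_nonneg ha.1.le (sub_nonneg.2 hx.2)]⟩
  have hmaps' : MapsTo (fun x => a * x + 1 - a) (Ioo 0 1) (Ioo 0 1) := fun x hx =>
    mul_add_one_sub_mem_Ioo ha hx
  have haff (x : ℝ) : HasDerivAt (fun x => a * x + 1 - a) a x := by
    simpa using (((hasDerivAt_id' x).const_mul a).add_const 1).sub_const a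
  refine concaveOn_of_hasDerivWithinAt2_nonpos (convex_Icc 0 1)
    (f' := fun x => f' (a * x + 1 - a) * a - f' x)
    (f'' := fun x => f'' (a * x + 1 - a) * a * a - f'' x)
    ((hf.comp (by fun_prop) hmaps).sub hf) ?_ ?_ ?_ <;> rw [interior_Icc] <;> intro x hx
  · exact (((hf' _ (hmaps' hx)).comp x (haff x)).sub (hf' x hx)).hasDerivWithinAt
  · exact ((((hf'' _ (hmaps' hx)).comp x (haff x)).mul_const a).sub (hf'' x hx)).hasDerivWithinAt
  · linarith [hle x hx]

lemma binH_eq_binEntropy_div (p : ℝ) : binH p = binEntropy p / log 2 := by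
  rw [binH, binEntropy, log_inv, log_inv, logb, logb]
  ring

lemma binH_zero : binH 0 = 0 := by simp [binH]

lemma binH_half : binH (1 / 2) = 1 := by
  rw [binH_eq_binEntropy_div, one_div, binEntropy_two_inv, div_self (log_pos one_lt_two).ne']

lemma binH_strictMonoOn : StrictMonoOn binH (Icc 0 (1 / 2)) := by
  rw [one_div]
  intro x hx y hy hxy
  simp only [binH_eq_binEntropy_div]
  exact div_lt_div_of_pos_right (binEntropy_strictMonoOn hx hy hxy) (log_pos one_lt_two)

lemma binH_mapsTo : MapsTo binH (Icc 0 (1 / 2)) (Icc 0 1) := fun p hp =>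
  ⟨binH_zero ▸ binH_strictMonoOn.monotoneOn ⟨le_rfl, by norm_num⟩ hp hp.1,
    binH_half ▸ binH_strictMonoOn.monotoneOn hp ⟨by norm_num, le_rfl⟩ hp.2⟩

lemma hasDerivAt_binH {t : ℝ} (h0 : t ≠ 0) (h1 : t ≠ 1) :
    HasDerivAt binH (entropySlope t / log 2) t := by
  rw [show binH = fun p => binEntropy p / log 2 from funext binH_eq_binEntropy_div]
  exact (hasDerivAt_binEntropy h0 h1).div_const (log 2)

def IsBinHInverse (g : ℝ → ℝ) : Prop :=
  ∀ x ∈ Icc (0 : ℝ) 1, binH (g x) = x ∧ g x ∈ Icc (0 : ℝ) (1 / 2)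

namespace IsBinHInverse

variable {g : ℝ → ℝ} {x : ℝ}

lemma apply_binH (hg : IsBinHInverse g) {p : ℝ} (hp : p ∈ Icc (0 : ℝ) (1 / 2)) :
    g (binH p) = p :=
  binH_strictMonoOn.injOn (hg _ (binH_mapsTo hp)).2 hp (hg _ (binH_mapsTo hp)).1

lemma strictMonoOn (hg : IsBinHInverse g) : StrictMonoOn g (Icc 0 1) := by
  intro x hx y hy hxy
  by_contra! h
  have := binH_strictMonoOn.monotoneOn (hg y hy).2 (hg x hx).2 h
  rw [(hg x hx).1, (hg y hy).1] at this
  linarith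

lemma image_Icc (hg : IsBinHInverse g) : g '' Icc 0 1 = Icc 0 (1 / 2) :=
  Subset.antisymm (image_subset_iff.2 fun x hx => (hg x hx).2)
    fun p hp => ⟨binH p, binH_mapsTo hp, hg.apply_binH hp⟩

lemma continuousOn (hg : IsBinHInverse g) : ContinuousOn g (Icc 0 1) :=
  hg.strictMonoOn.continuousOn_of_ordConnected_image (hg.image_Icc ▸ ordConnected_Icc)

lemma mem_Ioo (hg : IsBinHInverse g) (hx : x ∈ Ioo (0 : ℝ) 1) : g x ∈ Ioo (0 : ℝ) (1 / 2) := by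
  obtain ⟨hbin, hlo, hhi⟩ := hg x (Ioo_subset_Icc_self hx)
  refine ⟨hlo.lt_of_ne ?_, hhi.lt_of_ne ?_⟩ <;> rintro h
  · rw [← h, binH_zero] at hbin
    exact hx.1.ne hbin
  · rw [h, binH_half] at hbin
    exact hx.2.ne' hbin

lemma entropyDeficit_apply (hg : IsBinHInverse g) (hx : x ∈ Icc (0 : ℝ) 1) :
    entropyDeficit (g x) = (1 - x) * log 2 := by
  have := (hg x hx).1
  rw [binH_eq_binEntropy_div, div_eq_iff (log_pos one_lt_two).ne'] at this
  rw [entropyDeficit, this]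
  ring

lemma hasDerivAt (hg : IsBinHInverse g) (hx : x ∈ Ioo (0 : ℝ) 1) :
    HasDerivAt g (log 2 / entropySlope (g x)) x := by
  obtain ⟨hu0, hu1⟩ := hg.mem_Ioo hx
  have hslope : entropySlope (g x) / log 2 ≠ 0 :=
    div_ne_zero (entropySlope_pos hu0 hu1).ne' (log_pos one_lt_two).ne'
  have hinv : ∀ᶠ y in nhds x, binH (g y) = y :=
    Filter.eventually_of_mem (Ioo_mem_nhds hx.1 hx.2) fun y hy => (hg y (Ioo_subset_Icc_self hy)).1
  simpa only [inv_div] using HasDerivAt.of_local_left_inverse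
    (hg.continuousOn.continuousAt (Icc_mem_nhds hx.1 hx.2))
    (hasDerivAt_binH hu0.ne' (by linarith)) hslope hinv

lemma hasDerivAt_log_two_div_entropySlope (hg : IsBinHInverse g) (hx : x ∈ Ioo (0 : ℝ) 1) :
    HasDerivAt (fun y => log 2 / entropySlope (g y)) (deficitRatio (g x) / (1 - x) ^ 2) x := by
  obtain ⟨hu0, hu1⟩ := hg.mem_Ioo hx
  have hL := entropySlope_pos hu0 hu1
  refine ((hasDerivAt_const x (log 2)).div
    ((hasDerivAt_entropySlope hu0.ne' (by linarith)).comp x (hg.hasDerivAt hx)) hL.ne').congr_deriv ?_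
  have : 1 - g x ≠ 0 := by linarith
  have : 1 - x ≠ 0 := by linarith [hx.2]
  rw [deficitRatio, hg.entropyDeficit_apply (Ioo_subset_Icc_self hx), Function.comp_apply]
  field_simp
  ring

end IsBinHInverse

theorem stmt6_general (g : ℝ → ℝ)
    (hg_right : ∀ x ∈ Set.Icc (0:ℝ) 1, binH (g x) = x ∧ g x ∈ Set.Icc (0:ℝ) (1/2))
    (a : ℝ) (ha : a ∈ Set.Ioc (0:ℝ) 1) :
    ConcaveOn ℝ (Set.Icc 0 1) (fun x => g (a * x + 1 - a) - g x) := by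
  have hg : IsBinHInverse g := hg_right
  refine concaveOn_comp_affine_sub ha hg.continuousOn (fun x hx => hg.hasDerivAt hx)
    (fun x hx => hg.hasDerivAt_log_two_div_entropySlope hx) fun x hx => ?_
  have hℓx := mul_add_one_sub_mem_Ioo ha hx
  have hratio : deficitRatio (g (a * x + 1 - a)) ≤ deficitRatio (g x) :=
    deficitRatio_antitoneOn (hg.mem_Ioo hx) (hg.mem_Ioo hℓx) <|
      hg.strictMonoOn.monotoneOn (Ioo_subset_Icc_self hx) (Ioo_subset_Icc_self hℓx)
        (by nlinarith [ha.2, hx.2])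
  have ha0 : a ≠ 0 := ha.1.ne'
  have hx1 : 1 - x ≠ 0 := by linarith [hx.2]
  calc a ^ 2 * (deficitRatio (g (a * x + 1 - a)) / (1 - (a * x + 1 - a)) ^ 2)
      = deficitRatio (g (a * x + 1 - a)) / (1 - x) ^ 2 := by
        rw [show 1 - (a * x + 1 - a) = a * (1 - x) by ring]
        field_simp
    _ ≤ deficitRatio (g x) / (1 - x) ^ 2 := by gcongr

theorem stmt6 (g : ℝ → ℝ)
    (hg_left : ∀ p ∈ Set.Icc (0:ℝ) (1/2), g (binH p) = p)
    (hg_right : ∀ x ∈ Set.Icc (0:ℝ) 1, binH (g x) = x ∧ g x ∈ Set.Icc (0:ℝ) (1/2))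
    (a : ℝ) (ha : a ∈ Set.Ioc (0:ℝ) 1) :
    ConcaveOn ℝ (Set.Icc 0 1) (fun x => g (a * x + 1 - a) - g x) :=
  stmt6_general g hg_right a ha
end

section
/- Define h(y) = ln(2 − 2y) − y(2 − 3y + 2y²)·ln(1/y − 1) for y ∈ (0, 1/2]. Then h(y) ≥ 0 for all y ∈ (0, 1/2]. -/
open Real Set

/-! Since `h (1 / 2) = 0`, it suffices that `h` is antitone on `(0, 1 / 2]`. With `a = 1 - 2y` one
has `1 / y - 1 = (1 + a) / (1 - a)`, so the first term of the series
`log ((1 + a) / (1 - a)) = 2 ∑ a ^ (2k + 1) / (2k + 1)` gives `log (1 / y - 1) ≥ 2a`. Plugging this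
into `h' y = a - (2 - 6y + 6y²) log (1 / y - 1)` gives `h' y ≤ -3a³ ≤ 0`. -/

lemma two_mul_le_log_sub_log {a : ℝ} (ha₀ : 0 ≤ a) (ha₁ : a < 1) :
    2 * a ≤ log (1 + a) - log (1 - a) := by
  have hsum := hasSum_log_sub_log_of_abs_lt_one (abs_lt.2 ⟨by linarith, ha₁⟩)
  simpa using le_hasSum hsum 0 fun k _ => by positivity

lemma two_mul_one_sub_two_mul_le_log_inv_sub_one {x : ℝ} (hx₀ : 0 < x) (hx : x ≤ 1 / 2) :
    2 * (1 - 2 * x) ≤ log (1 / x - 1) := by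
  have hlog : log (1 / x - 1) = log (1 + (1 - 2 * x)) - log (1 - (1 - 2 * x)) := by
    rw [← log_div (by linarith) (by linarith)]
    congr 1
    field_simp
    ring
  rw [hlog]
  exact two_mul_le_log_sub_log (by linarith) (by linarith)

noncomputable def h (y : ℝ) : ℝ :=
  log (2 - 2 * y) - y * (2 - 3 * y + 2 * y ^ 2) * log (1 / y - 1)

lemma h_one_half : h (1 / 2) = 0 := by
  norm_num [h]

lemma hasDerivAt_h {x : ℝ} (hx₀ : 0 < x) (hx₁ : x < 1) :
    HasDerivAt h ((1 - 2 * x) - (2 - 6 * x + 6 * x ^ 2) * log (1 / x - 1)) x := by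
  have h₁ : HasDerivAt (fun y => log (2 - 2 * y)) (-2 / (2 - 2 * x)) x := by
    simpa using (((hasDerivAt_id' x).const_mul 2).const_sub 2).log (by linarith)
  have h₂ : HasDerivAt (fun y => y * (2 - 3 * y + 2 * y ^ 2)) (2 - 6 * x + 6 * x ^ 2) x :=
    ((hasDerivAt_id' x).mul ((((hasDerivAt_id' x).const_mul 3).const_sub 2).add
      ((hasDerivAt_pow 2 x).const_mul 2))).congr_deriv (by norm_num; ring)
  have h₃ : HasDerivAt (fun y => log (1 / y - 1)) (-(x ^ 2)⁻¹ / (1 / x - 1)) x := by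
    refine HasDerivAt.log ?_ ?_
    · simpa [one_div] using (hasDerivAt_inv hx₀.ne').sub_const 1
    · rw [one_div, sub_ne_zero, ne_eq, inv_eq_one]; exact hx₁.ne
  refine (h₁.sub (h₂.mul h₃)).congr_deriv ?_
  have : 1 - x ≠ 0 := by linarith
  have : 2 - 2 * x ≠ 0 := by linarith
  rw [show 1 / x - 1 = (1 - x) / x by field_simp]
  field_simp
  ring

lemma deriv_h_le {x : ℝ} (hx₀ : 0 < x) (hx : x ≤ 1 / 2) :
    deriv h x ≤ -3 * (1 - 2 * x) ^ 3 := by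
  have hcoef : 0 ≤ 2 - 6 * x + 6 * x ^ 2 := by nlinarith [sq_nonneg (2 * x - 1)]
  rw [(hasDerivAt_h hx₀ (by linarith)).deriv]
  calc (1 - 2 * x) - (2 - 6 * x + 6 * x ^ 2) * log (1 / x - 1)
      ≤ (1 - 2 * x) - (2 - 6 * x + 6 * x ^ 2) * (2 * (1 - 2 * x)) := by
        gcongr; exact two_mul_one_sub_two_mul_le_log_inv_sub_one hx₀ hx
    _ = -3 * (1 - 2 * x) ^ 3 := by ring

lemma antitoneOn_h : AntitoneOn h (Ioc 0 (1 / 2)) := by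
  have hdiff : ∀ x ∈ Ioc (0 : ℝ) (1 / 2), DifferentiableAt ℝ h x :=
    fun x hx => (hasDerivAt_h hx.1 (by linarith [hx.2])).differentiableAt
  refine antitoneOn_of_deriv_nonpos (convex_Ioc 0 (1 / 2))
    (fun x hx => (hdiff x hx).continuousAt.continuousWithinAt)
    (fun x hx => (hdiff x (interior_subset hx)).differentiableWithinAt) fun x hx => ?_
  rw [interior_Ioc] at hx
  have hcube : 0 ≤ (1 - 2 * x) ^ 3 := pow_nonneg (by linarith [hx.2]) 3
  linarith [deriv_h_le hx.1 hx.2.le]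

theorem stmt8 (y : ℝ) (hy : y ∈ Set.Ioc (0:ℝ) (1/2)) :
    0 ≤ Real.log (2 - 2 * y) - y * (2 - 3 * y + 2 * y ^ 2) * Real.log (1 / y - 1) := by
  have hmono := antitoneOn_h hy (right_mem_Ioc.2 (by norm_num)) hy.2
  rwa [h_one_half] at hmono
end

section
/- Let (n_j) be defined by n_0 = 0 and n_{j+1} = n_j + j², so n_j = ∑_{i<j} i². For any sequences X, Y : ℕ → Bool, if δ_i denotes the fraction of positions in [n_i, n_{i+1}) where X and Y differ, then limsup_{n→∞} (card {k<n : X k ≠ Y k})/n = limsup_{j→∞} (1/n_j)·∑_{i<j} δ_i·i². -/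
/-! The density of disagreements along the whole sequence and along the block boundaries `nseq j`
have the same limsup because the blocks are negligible: a position `n` in the block
`[nseq j, nseq (j + 1))` changes the count by at most `j²`, while `j² / nseq j = O(1 / j)`. -/

open Filter Finset Topology

/-- `nseq j = ∑_{i<j} i²`, the chunk boundaries. -/
def nseq (j : ℕ) : ℕ := ∑ i ∈ Finset.range j, i ^ 2

lemma limsup_le_limsup_of_eventually_le_add {α : Type*} {l : Filter α} {f : α → ℝ}
    {F e : ℕ → ℝ} (hf : IsCoboundedUnder (· ≤ ·) l f) (hF : IsBoundedUnder (· ≤ ·) atTop F)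
    (he : Tendsto e atTop (𝓝 0)) (h : ∀ J, ∀ᶠ x in l, ∃ j ≥ J, f x ≤ F j + e j) :
    limsup f l ≤ limsup F atTop := by
  refine le_of_forall_pos_le_add fun ε hε => limsup_le_of_le hf ?_
  have hFe : ∀ᶠ j in atTop, F j + e j < limsup F atTop + ε := by
    filter_upwards [eventually_lt_of_limsup_lt (lt_add_of_pos_right _ (half_pos hε)) hF,
      he.eventually_lt_const (half_pos hε)] with j hFj hej
    linarith
  obtain ⟨J, hJ⟩ := eventually_atTop.1 hFe
  filter_upwards [h J] with x ⟨j, hj, hx⟩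
  exact hx.trans (hJ j hj).le

lemma exists_le_lt_succ_of_tendsto_atTop {s : ℕ → ℕ} (hs : Tendsto s atTop atTop) {n : ℕ}
    (hn : s 0 ≤ n) : ∃ j, s j ≤ n ∧ n < s (j + 1) := by
  have hex : ∃ k, n < s k := (hs.eventually_gt_atTop n).exists
  have hk : Nat.find hex ≠ 0 := fun h => (h ▸ Nat.find_spec hex).not_ge hn
  refine ⟨Nat.find hex - 1, not_lt.1 (Nat.find_min hex (by omega)), ?_⟩
  rw [Nat.sub_add_cancel (Nat.one_le_iff_ne_zero.2 hk)]
  exact Nat.find_spec hex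

namespace Nat

variable (p : ℕ → Prop) [DecidablePred p]

lemma count_add_card_filter_Ico {a b : ℕ} (hab : a ≤ b) :
    count p a + #{k ∈ Ico a b | p k} = count p b := by
  simp only [count_eq_card_filter_range, card_filter]
  exact sum_range_add_sum_Ico _ hab

lemma sum_card_filter_Ico_eq_count {s : ℕ → ℕ} (hs : Monotone s) (h0 : s 0 = 0) (j : ℕ) :
    ∑ i ∈ range j, #{k ∈ Ico (s i) (s (i + 1)) | p k} = count p (s j) := by
  induction j with
  | zero => simp [h0]
  | succ j ih => rw [sum_range_succ, ih, count_add_card_filter_Ico p (hs j.le_succ)]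

lemma count_le_count_add_sub {a n : ℕ} (han : a ≤ n) : count p n ≤ count p a + (n - a) := by
  rw [← count_add_card_filter_Ico p han]
  exact Nat.add_le_add_left ((card_filter_le _ _).trans (card_Ico a n).le) _

lemma count_div_le_count_div_add {a b n : ℕ} (ha : 0 < a) (han : a ≤ n) (hnb : n ≤ b) :
    (count p n : ℝ) / n ≤ count p a / a + ((b : ℝ) - a) / a := by
  have hcount : (count p n : ℝ) ≤ count p a + ((b : ℝ) - a) := by
    have h := Nat.cast_le (α := ℝ) |>.2 (count_le_count_add_sub p han)
    have hnb' : (n : ℝ) ≤ b := by exact_mod_cast hnb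
    push_cast [han] at h
    linarith
  have ha' : (0 : ℝ) < a := by exact_mod_cast ha
  have hgap : (0 : ℝ) ≤ b - a := by
    have : (a : ℝ) ≤ b := by exact_mod_cast han.trans hnb
    linarith
  calc (count p n : ℝ) / n ≤ (count p a + ((b : ℝ) - a)) / n := by gcongr
    _ ≤ (count p a + ((b : ℝ) - a)) / a := by gcongr
    _ = count p a / a + ((b : ℝ) - a) / a := add_div _ _ _

lemma count_div_mem_Icc (n : ℕ) : (count p n : ℝ) / n ∈ Set.Icc 0 1 :=
  ⟨by positivity, div_le_one_of_le₀ (by exact_mod_cast count_le p) n.cast_nonneg⟩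

theorem limsup_count_div_eq_limsup_comp {s : ℕ → ℕ} (hs : Monotone s)
    (hs_top : Tendsto s atTop atTop)
    (hgap : Tendsto (fun j => ((s (j + 1) : ℝ) - s j) / s j) atTop (𝓝 0)) :
    limsup (fun n => (count p n : ℝ) / n) atTop =
      limsup (fun j => (count p (s j) : ℝ) / s j) atTop := by
  have h01 := count_div_mem_Icc p
  refine le_antisymm ?_ (hs_top.limsup_comp_le_limsup (u := fun n => (count p n : ℝ) / n)
    (isCoboundedUnder_le_of_le _ fun n => (h01 n).1) (isBoundedUnder_of ⟨1, fun n => (h01 n).2⟩))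
  refine limsup_le_limsup_of_eventually_le_add (isCoboundedUnder_le_of_le _ fun n => (h01 n).1)
    (isBoundedUnder_of ⟨1, fun j => (h01 (s j)).2⟩) hgap fun J => ?_
  obtain ⟨J₀, hJ₀⟩ := eventually_atTop.1 (hs_top.eventually_gt_atTop 0)
  filter_upwards [eventually_ge_atTop (s (max J J₀))] with n hn
  obtain ⟨j, hjn, hnj⟩ := exists_le_lt_succ_of_tendsto_atTop hs_top ((hs (zero_le _)).trans hn)
  have hj : max J J₀ ≤ j := by
    by_contra! h
    exact (hs (Nat.succ_le_of_lt h)).trans hn |>.not_gt hnj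
  exact ⟨j, le_of_max_le_left hj,
    count_div_le_count_div_add p (hJ₀ j (le_of_max_le_right hj)) hjn hnj.le⟩

end Nat

lemma nseq_zero : nseq 0 = 0 := rfl

lemma nseq_succ (j : ℕ) : nseq (j + 1) = nseq j + j ^ 2 := sum_range_succ _ _

lemma nseq_mono : Monotone nseq :=
  monotone_nat_of_le_succ fun j => by simp [nseq_succ]

lemma tendsto_nseq_atTop : Tendsto nseq atTop atTop :=
  tendsto_atTop_atTop_of_monotone nseq_mono fun b => ⟨b + 1, by rw [nseq_succ]; nlinarith⟩

lemma pow_three_le_nseq {j : ℕ} (hj : 2 ≤ j) : j ^ 3 ≤ 24 * nseq j := by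
  induction j, hj using Nat.le_induction with
  | base => decide
  | succ j hj ih => rw [nseq_succ]; nlinarith

lemma tendsto_nseq_gap :
    Tendsto (fun j => ((nseq (j + 1) : ℝ) - nseq j) / nseq j) atTop (𝓝 0) := by
  simp only [nseq_succ, Nat.cast_add, Nat.cast_pow, add_sub_cancel_left]
  refine squeeze_zero' (Eventually.of_forall fun j => by positivity) ?_
    (tendsto_const_div_atTop_nhds_zero_nat 24)
  filter_upwards [eventually_ge_atTop 2] with j hj
  have hcube : (j : ℝ) ^ 3 ≤ 24 * nseq j := by exact_mod_cast pow_three_le_nseq hj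
  have hj' : (0 : ℝ) < j := by positivity
  have hnseq : (0 : ℝ) < nseq j := by
    have : (0 : ℝ) < (j : ℝ) ^ 3 := by positivity
    linarith
  rw [div_le_div_iff₀ hnseq hj']
  nlinarith

theorem stmt10 (X Y : ℕ → Bool) :
    Filter.limsup
        (fun n => (((Finset.range n).filter (fun k => X k ≠ Y k)).card : ℝ) / n) Filter.atTop =
      Filter.limsup
        (fun j => (1 / (nseq j : ℝ)) *
          ∑ i ∈ Finset.range j,
            ((((Finset.Ico (nseq i) (nseq (i + 1))).filter (fun k => X k ≠ Y k)).card : ℝ)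
                / (i : ℝ) ^ 2) * (i : ℝ) ^ 2)
        Filter.atTop := by
  have hblock : ∀ i : ℕ, ((#{k ∈ Ico (nseq i) (nseq (i + 1)) | X k ≠ Y k} : ℕ) : ℝ)
      / (i : ℝ) ^ 2 * (i : ℝ) ^ 2 = #{k ∈ Ico (nseq i) (nseq (i + 1)) | X k ≠ Y k} :=
    fun i => div_mul_cancel_of_imp fun hi => by simp_all [nseq]
  simp only [hblock, ← Nat.cast_sum, Nat.sum_card_filter_Ico_eq_count _ nseq_mono nseq_zero,
    one_div_mul_eq_div, ← Nat.count_eq_card_filter_range]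
  exact Nat.limsup_count_div_eq_limsup_comp _ nseq_mono tendsto_nseq_atTop tendsto_nseq_gap
end

section
/- Let (s_i) be a sequence in [0,1], n_j = ∑_{i<j} i², and s = liminf_{j→∞} (1/n_j)∑_{i<j} s_i·i². If p : [0,1] → ℝ is concave, continuous, and nonincreasing on [s,1], then limsup_{j→∞} (1/n_j)∑_{i<j} p(s_i)·i² ≤ p(s). -/
open Filter Finset

lemma nseq_cast (j : ℕ) : (nseq j : ℝ) = ∑ i ∈ Finset.range j, (i : ℝ) ^ 2 := by
  unfold nseq; push_cast; ring

lemma nseq_pos {j : ℕ} (hj : 2 ≤ j) : (0 : ℝ) < (nseq j : ℝ) := by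
  have h1 : 1 ∈ Finset.range j := by simp; omega
  have : (1:ℕ) ≤ nseq j := by
    calc (1:ℕ) = 1 ^ 2 := by norm_num
    _ ≤ ∑ i ∈ Finset.range j, i ^ 2 :=
        Finset.single_le_sum (f := fun i => i ^ 2) (fun i _ => Nat.zero_le _) h1
  exact_mod_cast Nat.lt_of_lt_of_le Nat.zero_lt_one this

theorem stmt13 (s : ℕ → ℝ) (hs : ∀ i, s i ∈ Set.Icc (0:ℝ) 1)
    (S : ℝ)
    (hS : S = Filter.liminf
        (fun j => (1 / (nseq j : ℝ)) * ∑ i ∈ Finset.range j, s i * (i : ℝ) ^ 2)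
        Filter.atTop)
    (p : ℝ → ℝ)
    (hconc : ConcaveOn ℝ (Set.Icc 0 1) p)
    (hcont : ContinuousOn p (Set.Icc 0 1))
    (hanti : AntitoneOn p (Set.Icc S 1)) :
    Filter.limsup
        (fun j => (1 / (nseq j : ℝ)) * ∑ i ∈ Finset.range j, p (s i) * (i : ℝ) ^ 2)
        Filter.atTop ≤ p S := by
  set A := fun j : ℕ => (1 / (nseq j : ℝ)) * ∑ i ∈ Finset.range j, s i * (i : ℝ) ^ 2 with hA
  set B := fun j : ℕ => (1 / (nseq j : ℝ)) * ∑ i ∈ Finset.range j, p (s i) * (i : ℝ) ^ 2 with hB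
  have hAmem : ∀ j, A j ∈ Set.Icc (0:ℝ) 1 := by
    intro j
    by_cases h : (nseq j : ℝ) = 0
    · simp [hA, h]
    · have hpos : (0:ℝ) < (nseq j : ℝ) :=
        lt_of_le_of_ne (Nat.cast_nonneg _) (Ne.symm h)
      constructor
      · apply mul_nonneg (by positivity)
        apply Finset.sum_nonneg
        intro i _
        exact mul_nonneg (hs i).1 (by positivity)
      · rw [hA]
        simp only
        rw [one_div, inv_mul_le_iff₀ hpos, mul_one, nseq_cast j]
        apply Finset.sum_le_sum
        intro i _
        nlinarith [(hs i).2, sq_nonneg (i:ℝ)]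
  have hAbdd : Filter.IsBoundedUnder (· ≥ ·) Filter.atTop A :=
    Filter.isBoundedUnder_of ⟨0, fun j => (hAmem j).1⟩
  have hAbdd' : Filter.IsBoundedUnder (· ≤ ·) Filter.atTop A :=
    Filter.isBoundedUnder_of ⟨1, fun j => (hAmem j).2⟩
  have hS0 : 0 ≤ S := by
    rw [hS]
    exact Filter.le_liminf_of_le hAbdd'.isCoboundedUnder_ge
      (Filter.Eventually.of_forall fun j => (hAmem j).1)
  have hS1 : S ≤ 1 := by
    rw [hS]
    exact Filter.liminf_le_of_frequently_le
      ((Filter.Eventually.of_forall fun j => (hAmem j).2).frequently) hAbdd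
  -- Jensen
  have hjensen : ∀ j, 2 ≤ j → B j ≤ p (A j) := by
    intro j hj
    have hpos := nseq_pos hj
    have hne : (nseq j : ℝ) ≠ 0 := ne_of_gt hpos
    have h := hconc.le_map_sum (t := Finset.range j)
      (w := fun i => (i:ℝ)^2 / (nseq j : ℝ)) (p := s)
      (fun i _ => by positivity)
      (by rw [← Finset.sum_div, ← nseq_cast j, div_self hne])
      (fun i _ => hs i)
    calc B j = ∑ i ∈ Finset.range j, ((i:ℝ)^2 / (nseq j : ℝ)) • p (s i) := by
          rw [hB]; simp only [smul_eq_mul]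
          rw [Finset.mul_sum]
          exact Finset.sum_congr rfl fun i _ => by ring
      _ ≤ p (∑ i ∈ Finset.range j, ((i:ℝ)^2 / (nseq j : ℝ)) • s i) := h
      _ = p (A j) := by
          congr 1
          rw [hA]; simp only [smul_eq_mul]
          rw [Finset.mul_sum]
          exact (Finset.sum_congr rfl fun i _ => by ring).symm
  -- lower bound on B for coboundedness
  obtain ⟨C, hC⟩ := (isCompact_Icc (a := (0:ℝ)) (b := 1)).exists_bound_of_continuousOn hcont
  set M := max C 0 with hM
  have hBlow : ∀ j, -M ≤ B j := by
    intro j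
    by_cases h : (nseq j : ℝ) = 0
    · simp only [hB, h, one_div, inv_zero, zero_mul]
      simp [hM]
    · have hpos : (0:ℝ) < (nseq j : ℝ) :=
        lt_of_le_of_ne (Nat.cast_nonneg _) (Ne.symm h)
      have h1 : ∀ i ∈ Finset.range j, (-M) * (i:ℝ)^2 ≤ p (s i) * (i:ℝ)^2 := by
        intro i _
        apply mul_le_mul_of_nonneg_right _ (by positivity)
        have h2 := hC (s i) (hs i)
        rw [Real.norm_eq_abs] at h2
        have h3 := abs_le.mp h2
        have : C ≤ M := le_max_left C 0
        linarith [h3.1]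
      have h2 : (-M) * (nseq j : ℝ) ≤ ∑ i ∈ Finset.range j, p (s i) * (i:ℝ)^2 := by
        rw [nseq_cast j, Finset.mul_sum]
        exact Finset.sum_le_sum h1
      have h3 := mul_le_mul_of_nonneg_left h2 (by positivity : (0:ℝ) ≤ 1 / (nseq j : ℝ))
      calc -M = (1 / (nseq j : ℝ)) * ((-M) * (nseq j : ℝ)) := by field_simp
        _ ≤ B j := h3
  have hBcobdd : Filter.IsCoboundedUnder (· ≤ ·) Filter.atTop B :=
    Filter.IsBoundedUnder.isCoboundedUnder_le
      (Filter.isBoundedUnder_of ⟨-M, fun j => hBlow j⟩)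
  -- main argument
  apply le_of_forall_pos_le_add
  intro δ hδ
  have hSmem : S ∈ Set.Icc (0:ℝ) 1 := ⟨hS0, hS1⟩
  have hcw : ContinuousWithinAt p (Set.Icc 0 1) S := hcont S hSmem
  obtain ⟨ε, hε, hball⟩ := Metric.continuousWithinAt_iff.mp hcw δ hδ
  have hev : ∀ᶠ j in Filter.atTop, S - ε < A j := by
    apply Filter.eventually_lt_of_lt_liminf
    · rw [← hS]; linarith
    · exact hAbdd
  have hev2 : ∀ᶠ j in Filter.atTop, B j ≤ p S + δ := by
    filter_upwards [hev, Filter.eventually_ge_atTop 2] with j h1 h2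
    have hj := hjensen j h2
    have hkey : p (A j) ≤ p S + δ := by
      rcases le_or_gt S (A j) with hc | hc
      · have := hanti ⟨le_refl S, hS1⟩ ⟨hc, (hAmem j).2⟩ hc
        linarith
      · have hd : dist (A j) S < ε := by
          rw [Real.dist_eq, abs_lt]; constructor <;> linarith
        have h4 := hball (hAmem j) hd
        rw [Real.dist_eq] at h4
        have h5 := abs_lt.mp h4
        linarith [h5.1, h5.2]
    linarith
  exact Filter.limsup_le_of_le hBcobdd hev2
end

section
/- For every ε > 0 there exists q < 1 such that for all n ≥ 1 and all A ⊆ {0,1}ⁿ with |A| ≥ 2^{qn}, the set B = {σ ∈ {0,1}ⁿ : d(σ, A) > ε} has size at most 2^{qn}, where d is normalized Hamming distance. -/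
open Finset
open scoped Classical

/-- Normalized Hamming distance on `{0,1}ⁿ`. -/
noncomputable def hamD {n : ℕ} (σ τ : Fin n → Bool) : ℝ :=
  ((Finset.univ.filter (fun k => σ k ≠ τ k)).card : ℝ) / n

/-!
Instead of Harper's theorem we use concentration of measure on the cube. The distance `f` to `A`
is 1-Lipschitz for the Hamming metric, and fixing one coordinate at a time (the two-point
inequality `cosh u ≤ exp (u² / 2)`) bounds its exponential moments:
`∑ e^{tf} · ∑ e^{-tf} ≤ 4ⁿ e^{t²n/4}`. As `f = 0` on `A` and `f > εn` on `B`, the choice `t = 2ε`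
gives `|A| |B| ≤ 4ⁿ e^{-ε²n}`, and `q = 1 - ε² / (2 log 2)` makes the right-hand side `(2^{qn})²`.
-/

open Real

theorem exp_mul_add_exp_mul_le {a b : ℝ} (t : ℝ) (h : |a - b| ≤ 1) :
    exp (t * a) + exp (t * b) ≤ 2 * exp (t * ((a + b) / 2)) * exp (t ^ 2 / 8) := by
  have hcosh : exp (t * a) + exp (t * b) =
      2 * exp (t * ((a + b) / 2)) * cosh (t * ((a - b) / 2)) := by
    have e1 : t * a = t * ((a + b) / 2) + t * ((a - b) / 2) := by ring
    have e2 : t * b = t * ((a + b) / 2) + -(t * ((a - b) / 2)) := by ring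
    rw [cosh_eq, e1, e2, exp_add, exp_add]
    ring
  have hsq : (t * ((a - b) / 2)) ^ 2 / 2 ≤ t ^ 2 / 8 := by
    have : (a - b) ^ 2 ≤ 1 := by
      rw [← sq_abs]; exact pow_le_one₀ (abs_nonneg _) h
    nlinarith [sq_nonneg t]
  rw [hcosh]
  gcongr
  exact (cosh_le_exp_half_sq _).trans (exp_le_exp.2 hsq)

theorem hammingDist_fin_cons {β : Type*} [DecidableEq β] {n : ℕ} (a b : β) (x y : Fin n → β) :
    hammingDist (Fin.cons a x : Fin (n + 1) → β) (Fin.cons b y) =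
      (if a = b then 0 else 1) + hammingDist x y := by
  simp only [hammingDist, card_filter, Fin.sum_univ_succ, Fin.cons_zero, Fin.cons_succ, ne_eq,
    ite_not]

theorem Fintype.sum_pi_fin_succ {M β : Type*} [AddCommMonoid M] [Fintype β] {n : ℕ}
    (F : (Fin (n + 1) → β) → M) : ∑ x, F x = ∑ a, ∑ x : Fin n → β, F (Fin.cons a x) := by
  rw [← (Fin.consEquiv fun _ => β).sum_comp F, Fintype.sum_prod_type]
  rfl

theorem sum_exp_mul_le_of_abs_sub_le_hammingDist {n : ℕ} {f : (Fin n → Bool) → ℝ}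
    (hf : ∀ x y, |f x - f y| ≤ hammingDist x y) (t : ℝ) :
    ∑ x, exp (t * f x) ≤ 2 ^ n * exp (t * ((∑ x, f x) / 2 ^ n) + t ^ 2 * n / 8) := by
  induction n with
  | zero => simp
  | succ n ih =>
    set g : (Fin n → Bool) → ℝ := fun x => (f (Fin.cons true x) + f (Fin.cons false x)) / 2
    have hslice (b : Bool) (x y : Fin n → Bool) :
        |f (Fin.cons b x) - f (Fin.cons b y)| ≤ hammingDist x y := by
      simpa [hammingDist_fin_cons] using hf (Fin.cons b x) (Fin.cons b y)
    have hg (x y : Fin n → Bool) : |g x - g y| ≤ hammingDist x y := by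
      have h₁ := abs_le.1 (hslice true x y)
      have h₀ := abs_le.1 (hslice false x y)
      exact abs_le.2 ⟨by simp only [g]; linarith, by simp only [g]; linarith⟩
    have hflip (x : Fin n → Bool) : |f (Fin.cons true x) - f (Fin.cons false x)| ≤ 1 := by
      simpa [hammingDist_fin_cons] using hf (Fin.cons true x) (Fin.cons false x)
    have hsum (F : (Fin (n + 1) → Bool) → ℝ) :
        ∑ x, F x = ∑ x, (F (Fin.cons true x) + F (Fin.cons false x)) := by
      rw [Fintype.sum_pi_fin_succ, Fintype.sum_bool, sum_add_distrib]
    have hmean : (∑ x, g x) / 2 ^ n = (∑ x, f x) / 2 ^ (n + 1) := by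
      rw [hsum f, ← sum_div, pow_succ', div_div]
    calc ∑ x, exp (t * f x)
        = ∑ x, (exp (t * f (Fin.cons true x)) + exp (t * f (Fin.cons false x))) := hsum _
      _ ≤ ∑ x, 2 * exp (t * g x) * exp (t ^ 2 / 8) :=
          sum_le_sum fun x _ => exp_mul_add_exp_mul_le t (hflip x)
      _ = 2 * exp (t ^ 2 / 8) * ∑ x, exp (t * g x) := by
          rw [mul_sum]; exact sum_congr rfl fun _ _ => by ring
      _ ≤ 2 * exp (t ^ 2 / 8) * (2 ^ n * exp (t * ((∑ x, g x) / 2 ^ n) + t ^ 2 * n / 8)) := by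
          gcongr; exact ih hg
      _ = 2 ^ (n + 1) * exp (t * ((∑ x, f x) / 2 ^ (n + 1)) + t ^ 2 * ↑(n + 1) / 8) := by
          rw [hmean, pow_succ, Nat.cast_succ, ← mul_assoc, mul_right_comm _ (exp _), mul_assoc,
            ← exp_add]
          ring_nf

theorem sum_exp_mul_mul_sum_exp_neg_mul_le {n : ℕ} {f : (Fin n → Bool) → ℝ}
    (hf : ∀ x y, |f x - f y| ≤ hammingDist x y) (t : ℝ) :
    (∑ x, exp (t * f x)) * ∑ x, exp (-t * f x) ≤ 4 ^ n * exp (t ^ 2 * n / 4) := by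
  calc (∑ x, exp (t * f x)) * ∑ x, exp (-t * f x)
      ≤ (2 ^ n * exp (t * ((∑ x, f x) / 2 ^ n) + t ^ 2 * n / 8)) *
          (2 ^ n * exp (-t * ((∑ x, f x) / 2 ^ n) + (-t) ^ 2 * n / 8)) := by
        gcongr
        · exact sum_exp_mul_le_of_abs_sub_le_hammingDist hf t
        · exact sum_exp_mul_le_of_abs_sub_le_hammingDist hf (-t)
    _ = 4 ^ n * exp (t ^ 2 * n / 4) := by
        rw [mul_mul_mul_comm, ← mul_pow, ← exp_add]
        ring_nf

theorem card_mul_card_le_of_lt_hammingDist {n : ℕ} {A B : Finset (Fin n → Bool)} {r : ℝ}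
    (hr : 0 ≤ r) (hAB : ∀ x ∈ B, ∀ y ∈ A, r < hammingDist x y) :
    (#A * #B : ℝ) ≤ 4 ^ n * exp (-(r ^ 2 / n)) := by
  rcases A.eq_empty_or_nonempty with rfl | hA
  · simp only [card_empty, Nat.cast_zero, zero_mul]
    positivity
  set f : (Fin n → Bool) → ℝ := fun x => A.inf' hA fun y => (hammingDist x y : ℝ)
  have hf_le (x x' : Fin n → Bool) : f x ≤ f x' + hammingDist x x' := by
    obtain ⟨y, hy, hfy⟩ := exists_mem_eq_inf' hA fun y => (hammingDist x' y : ℝ)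
    calc f x ≤ hammingDist x y := inf'_le _ hy
      _ ≤ hammingDist x x' + hammingDist x' y := by exact_mod_cast hammingDist_triangle x x' y
      _ = f x' + hammingDist x x' := by rw [show f x' = _ from hfy, add_comm]
  have hf (x x' : Fin n → Bool) : |f x - f x'| ≤ hammingDist x x' :=
    abs_sub_le_iff.2 ⟨by linarith [hf_le x x'], by linarith [hammingDist_comm x' x ▸ hf_le x' x]⟩
  have hfA (x : Fin n → Bool) (hx : x ∈ A) : f x = 0 :=
    le_antisymm (by simpa using inf'_le (fun y => (hammingDist x y : ℝ)) hx)
      (le_inf' hA _ fun _ _ => Nat.cast_nonneg _)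
  have hfB (x : Fin n → Bool) (hx : x ∈ B) : r < f x := (lt_inf'_iff hA).2 (hAB x hx)
  set t : ℝ := 2 * r / n
  have ht : 0 ≤ t := by positivity
  have hA_le : (#A : ℝ) ≤ ∑ x, exp (-t * f x) :=
    calc (#A : ℝ) = ∑ x ∈ A, exp (-t * f x) := by
          rw [sum_congr rfl fun x hx => by rw [hfA x hx, mul_zero, exp_zero]]; simp
      _ ≤ ∑ x, exp (-t * f x) := sum_le_univ_sum_of_nonneg fun _ => (exp_pos _).le
  have hB_le : #B * exp (t * r) ≤ ∑ x, exp (t * f x) :=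
    calc #B * exp (t * r) = ∑ x ∈ B, exp (t * r) := by rw [sum_const, nsmul_eq_mul]
      _ ≤ ∑ x ∈ B, exp (t * f x) := by gcongr with x hx; exact (hfB x hx).le
      _ ≤ ∑ x, exp (t * f x) := sum_le_univ_sum_of_nonneg fun _ => (exp_pos _).le
  have hexponent : t ^ 2 * n / 4 - t * r = -(r ^ 2 / n) := by
    rcases eq_or_ne (n : ℝ) 0 with hn | hn
    · simp [t, hn]
    · simp only [t]; field_simp; ring
  calc (#A * #B : ℝ) = #A * (#B * exp (t * r)) * exp (-(t * r)) := by
        rw [mul_assoc, mul_assoc, ← exp_add, add_neg_cancel, exp_zero, mul_one]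
    _ ≤ (∑ x, exp (-t * f x)) * (∑ x, exp (t * f x)) * exp (-(t * r)) := by gcongr
    _ ≤ 4 ^ n * exp (t ^ 2 * n / 4) * exp (-(t * r)) := by
        rw [mul_comm (∑ x, _)]
        exact mul_le_mul_of_nonneg_right (sum_exp_mul_mul_sum_exp_neg_mul_le hf t) (exp_pos _).le
    _ = 4 ^ n * exp (-(r ^ 2 / n)) := by rw [mul_assoc, ← exp_add, ← hexponent, sub_eq_add_neg]

theorem stmt14 (ε : ℝ) (hε : 0 < ε) :
    ∃ q : ℝ, q < 1 ∧ ∀ n : ℕ, 1 ≤ n → ∀ A : Finset (Fin n → Bool),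
      (2 : ℝ) ^ (q * n) ≤ A.card →
      (((Finset.univ.filter (fun σ : Fin n → Bool => ∀ τ ∈ A, ε < hamD σ τ)).card : ℝ)
        ≤ (2 : ℝ) ^ (q * n)) := by
  have hlog : 0 < log 2 := log_pos one_lt_two
  have hgap : 0 < ε ^ 2 / (2 * log 2) := by positivity
  refine ⟨1 - ε ^ 2 / (2 * log 2), by linarith, fun n hn A hA => ?_⟩
  set Q := (2 : ℝ) ^ ((1 - ε ^ 2 / (2 * log 2)) * n)
  set B := univ.filter fun σ : Fin n → Bool => ∀ τ ∈ A, ε < hamD σ τ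
  have hn₀ : (0 : ℝ) < n := by exact_mod_cast hn
  have hsep (x : Fin n → Bool) (hx : x ∈ B) (y : Fin n → Bool) (hy : y ∈ A) :
      ε * n < hammingDist x y := by
    have := (mem_filter.1 hx).2 y hy
    rwa [hamD, lt_div_iff₀ hn₀] at this
  have hQ_sq : Q * Q = 4 ^ n * exp (-((ε * n) ^ 2 / n)) := by
    simp only [Q]
    rw [rpow_def_of_pos two_pos, ← exp_add, ← rpow_natCast 4 n, rpow_def_of_pos four_pos,
      ← exp_add, show (4 : ℝ) = 2 ^ 2 by norm_num, log_pow]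
    congr 1
    field_simp
    ring
  have hQ : 0 < Q := by positivity
  have hAB := card_mul_card_le_of_lt_hammingDist (by positivity) hsep
  refine le_of_mul_le_mul_left ?_ hQ
  calc Q * #B ≤ #A * #B := by gcongr
    _ ≤ Q * Q := hQ_sq ▸ hAB
end
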